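/- arXiv:1708.02371 — 3 statements merged into one kernel-verified Lean document; each statement's English description precedes it below -/
import Mathlib

section
/- Suppose t̄ > 0 is a local minimum of f on (0, ∞), and suppose x̄ ∈ X attains the minimum defining f(t̄), i.e., f(t̄) = g(x̄, t̄). Then the upper bound is tight at t̄: cᵀx̄ + Ω·√(x̄ᵀQx̄) = f(t̄); moreover t̄ = √(x̄ᵀQx̄). -/
/-!
For fixed `x̄` the function `t ↦ g(x̄, t)` dominates `f` and touches it at `t̄`, so it also has a
local minimum at the interior point `t̄`. Its derivative `(Ω/2)(1 - x̄ᵀQx̄ / t²)` therefore vanishes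
there, i.e. `x̄ᵀQx̄ = t̄²`, and substituting `t̄ = √(x̄ᵀQx̄)` into `g(x̄, t̄)` gives the upper bound.
-/

open Matrix

open Topology

lemma isLocalMin_of_forall_abs_sub_le {f : ℝ → ℝ} {s : Set ℝ} {a : ℝ} (hs : s ∈ 𝓝 a)
    (h : ∃ δ > 0, ∀ t ∈ s, |t - a| ≤ δ → f a ≤ f t) : IsLocalMin f a := by
  obtain ⟨δ, hδ, h⟩ := h
  filter_upwards [hs, Metric.closedBall_mem_nhds a hδ] with t hts hta
  exact h t hts hta

lemma IsLocalMin.of_le_of_eq {α β : Type*} [TopologicalSpace α] [Preorder β] {f φ : α → β}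
    {a : α} (hf : IsLocalMin f a) (hle : ∀ t, f t ≤ φ t) (heq : f a = φ a) : IsLocalMin φ a := by
  filter_upwards [hf] with t ht
  exact heq ▸ ht.trans (hle t)

lemma sq_eq_of_isLocalMin_div_add_mul {a q Ω t : ℝ} (hΩ : Ω ≠ 0) (ht : t ≠ 0)
    (hmin : IsLocalMin (fun s => a + Ω / (2 * s) * q + Ω / 2 * s) t) : q = t ^ 2 := by
  have hderiv : HasDerivAt (fun s => a + Ω / (2 * s) * q + Ω / 2 * s)
      (Ω / 2 * q * -(t ^ 2)⁻¹ + Ω / 2 * 1) t := by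
    refine ((((hasDerivAt_inv ht).const_mul (Ω / 2 * q)).const_add a).add
      ((hasDerivAt_id t).const_mul (Ω / 2))).congr_of_eventuallyEq (.of_forall fun s => ?_)
    simp only [Pi.add_apply, id]
    ring
  have h : Ω * (t ^ 2 - q) = 0 := by
    have := hmin.hasDerivAt_eq_zero hderiv
    field_simp at this
    linarith
  linarith [(mul_eq_zero.1 h).resolve_left hΩ]

theorem upper_bound_tight_at_local_minima_general {n : ℕ}
    (Q : Matrix (Fin n) (Fin n) ℝ)
    (c : Fin n → ℝ) (Omega : ℝ) (hOmega : 0 < Omega)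
    (X : Finset (Fin n → ℝ)) (hX : X.Nonempty)
    (g : (Fin n → ℝ) → ℝ → ℝ)
    (hg : ∀ x t, g x t = c ⬝ᵥ x + (Omega / (2 * t)) * (x ⬝ᵥ Q.mulVec x) + (Omega / 2) * t)
    (f : ℝ → ℝ) (hf : ∀ t, f t = X.inf' hX (fun x => g x t))
    (tbar : ℝ) (htbar : 0 < tbar)
    (hloc : ∃ δ > 0, ∀ t : ℝ, 0 < t → |t - tbar| ≤ δ → f tbar ≤ f t)
    (xbar : Fin n → ℝ) (hxbar : xbar ∈ X) (hatt : f tbar = g xbar tbar) :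
    c ⬝ᵥ xbar + Omega * Real.sqrt (xbar ⬝ᵥ Q.mulVec xbar) = f tbar ∧
    tbar = Real.sqrt (xbar ⬝ᵥ Q.mulVec xbar) := by
  have hmin : IsLocalMin (g xbar) tbar :=
    (isLocalMin_of_forall_abs_sub_le (Ioi_mem_nhds htbar) hloc).of_le_of_eq
      (fun t => hf t ▸ X.inf'_le _ hxbar) hatt
  have hq : xbar ⬝ᵥ Q.mulVec xbar = tbar ^ 2 :=
    sq_eq_of_isLocalMin_div_add_mul hOmega.ne' htbar.ne' (funext (hg xbar) ▸ hmin)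
  have hsqrt : Real.sqrt (xbar ⬝ᵥ Q.mulVec xbar) = tbar := by rw [hq, Real.sqrt_sq htbar.le]
  refine ⟨?_, hsqrt.symm⟩
  rw [hatt, hg, hsqrt, hq]
  field_simp
  ring

theorem upper_bound_tight_at_local_minima {n : ℕ}
    (Q : Matrix (Fin n) (Fin n) ℝ) (hQ : Q.PosSemidef)
    (c : Fin n → ℝ) (Omega : ℝ) (hOmega : 0 < Omega)
    (X : Finset (Fin n → ℝ)) (hX : X.Nonempty)
    (g : (Fin n → ℝ) → ℝ → ℝ)
    (hg : ∀ x t, g x t = c ⬝ᵥ x + (Omega / (2 * t)) * (x ⬝ᵥ Q.mulVec x) + (Omega / 2) * t)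
    (f : ℝ → ℝ) (hf : ∀ t, f t = X.inf' hX (fun x => g x t))
    (tbar : ℝ) (htbar : 0 < tbar)
    (hloc : ∃ δ > 0, ∀ t : ℝ, 0 < t → |t - tbar| ≤ δ → f tbar ≤ f t)
    (xbar : Fin n → ℝ) (hxbar : xbar ∈ X) (hatt : f tbar = g xbar tbar) :
    c ⬝ᵥ xbar + Omega * Real.sqrt (xbar ⬝ᵥ Q.mulVec xbar) = f tbar ∧
    tbar = Real.sqrt (xbar ⬝ᵥ Q.mulVec xbar) :=
  upper_bound_tight_at_local_minima_general Q c Omega hOmega X hX g hg f hf tbar htbar hloc xbar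
    hxbar hatt
end

section
/- The mean-risk problem and its perspective reformulation are equivalent: min_{x ∈ X} ( cᵀx + Ω·√(xᵀQx) ) = inf_{t > 0} f(t), i.e., the minimum over x ∈ X of cᵀx + Ω·√(xᵀQx) equals the infimum over t > 0 and x ∈ X of cᵀx + (Ω/(2t))·xᵀQx + (Ω/2)·t. -/
/-!
For `q ≥ 0` and `t > 0`, AM–GM gives `q / (2t) + t / 2 ≥ √q`, and `√q` is the infimum over `t > 0`:
it is attained at `t = √q` when `q > 0` and approached as `t → 0` when `q = 0`. Scaling by `Ω` and
adding `cᵀx` turns this into `inf_t g(x, t) = cᵀx + Ω √(xᵀQx)`, and infima over `t` and over the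
finite set `X` commute.
-/

open Matrix Set

theorem Finset.isGLB_image_inf' {ι α β : Type*} [SemilatticeInf β] (s : Finset ι)
    (hs : s.Nonempty) {φ : ι → α → β} {ψ : ι → β} {T : Set α}
    (h : ∀ i ∈ s, IsGLB (φ i '' T) (ψ i)) :
    IsGLB ((fun t => s.inf' hs (φ · t)) '' T) (s.inf' hs ψ) := by
  constructor
  · rintro _ ⟨t, ht, rfl⟩
    exact le_inf' _ _ fun i hi => (inf'_le ψ hi).trans ((h i hi).1 ⟨t, ht, rfl⟩)
  · refine fun b hb => le_inf' _ _ fun i hi => (h i hi).2 ?_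
    rintro _ ⟨t, ht, rfl⟩
    exact (hb ⟨t, ht, rfl⟩).trans (inf'_le _ hi)

theorem Real.sqrt_le_div_add_half {q t : ℝ} (hq : 0 ≤ q) (ht : 0 < t) :
    √q ≤ q / (2 * t) + t / 2 := by
  rw [div_add_div _ _ (by positivity) two_ne_zero, le_div_iff₀ (by positivity)]
  nlinarith [sq_nonneg (√q - t), Real.sq_sqrt hq]

theorem Real.isGLB_sqrt_perspective {q : ℝ} (hq : 0 ≤ q) :
    IsGLB ((fun t => q / (2 * t) + t / 2) '' Ioi 0) √q := by
  rcases hq.eq_or_lt with rfl | hq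
  · have h := (isGLB_Ioi (a := (0 : ℝ))).mul_left (a := 2⁻¹) (by norm_num)
    simp only [zero_div, zero_add, Real.sqrt_zero, mul_zero] at h ⊢
    simpa only [div_eq_inv_mul] using h
  · refine IsLeast.isGLB ⟨⟨√q, Real.sqrt_pos.2 hq, ?_⟩, ?_⟩
    · field_simp
      rw [Real.sq_sqrt hq.le]
      ring
    · rintro _ ⟨t, ht, rfl⟩
      exact Real.sqrt_le_div_add_half hq.le ht

theorem Real.isGLB_perspective {q : ℝ} (hq : 0 ≤ q) {Ω : ℝ} (hΩ : 0 ≤ Ω) (a : ℝ) :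
    IsGLB ((fun t => a + Ω / (2 * t) * q + Ω / 2 * t) '' Ioi 0) (a + Ω * √q) := by
  have hfun : (fun t : ℝ => a + Ω / (2 * t) * q + Ω / 2 * t) =
      (a + ·) ∘ (Ω * ·) ∘ fun t => q / (2 * t) + t / 2 := by
    funext t
    simp only [Function.comp_apply]
    ring
  rw [hfun, image_comp, image_comp]
  exact (OrderIso.addLeft a).isGLB_image'.2 ((isGLB_sqrt_perspective hq).mul_left hΩ)

theorem meanRisk_eq_perspective_reformulation {n : ℕ}
    (Q : Matrix (Fin n) (Fin n) ℝ) (hQ : Q.PosSemidef)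
    (c : Fin n → ℝ) (Omega : ℝ) (hOmega : 0 < Omega)
    (X : Finset (Fin n → ℝ)) (hX : X.Nonempty)
    (g : (Fin n → ℝ) → ℝ → ℝ)
    (hg : ∀ x t, g x t = c ⬝ᵥ x + (Omega / (2 * t)) * (x ⬝ᵥ Q.mulVec x) + (Omega / 2) * t)
    (f : ℝ → ℝ) (hf : ∀ t, f t = X.inf' hX (fun x => g x t)) :
    X.inf' hX (fun x => c ⬝ᵥ x + Omega * Real.sqrt (x ⬝ᵥ Q.mulVec x)) =
      sInf {z : ℝ | ∃ t : ℝ, 0 < t ∧ z = f t} := by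
  have hg_glb (x) (_ : x ∈ X) : IsGLB (g x '' Ioi 0) (c ⬝ᵥ x + Omega * √(x ⬝ᵥ Q *ᵥ x)) := by
    rw [show g x = _ from funext (hg x)]
    exact Real.isGLB_perspective (hQ.dotProduct_mulVec_nonneg x) hOmega.le _
  have hf_glb := X.isGLB_image_inf' hX hg_glb
  rw [show (fun t => X.inf' hX (g · t)) = f from funext fun t => (hf t).symm] at hf_glb
  have hset : {z : ℝ | ∃ t : ℝ, 0 < t ∧ z = f t} = f '' Ioi 0 := by
    ext z
    simp [eq_comm]
  rw [hset, hf_glb.csInf_eq (nonempty_Ioi.image f)]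
end

section
/- Suppose t* > 0 attains the infimum of f over (0, ∞), i.e., f(t*) ≤ f(t) for all t > 0, and suppose x* ∈ X attains the minimum defining f(t*), i.e., f(t*) = g(x*, t*). Then x* is an optimal solution of the mean-risk problem: cᵀx* + Ω·√(x*ᵀQx*) = min_{x ∈ X} ( cᵀx + Ω·√(xᵀQx) ), and this common value equals f(t*). -/
open Matrix

/-!
For `q ≥ 0` and `Ω ≥ 0`, AM-GM gives `Ω √q = inf_{t > 0} (Ω q / (2t) + Ω t / 2)`, attained at
`t = √q` when `q > 0`. Hence the mean-risk objective `F x = cᵀx + Ω √(xᵀQx)` is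
`inf_{t > 0} g(x, t)`, and swapping the two infima, `min_{x ∈ X} F = inf_{t > 0} f = f(t*)`.
On the other hand `F(x*) ≤ g(x*, t*) = f(t*)`, so `x*` attains both.
-/

namespace Real

lemma mul_sqrt_le_div_mul_add {Ω q t : ℝ} (hΩ : 0 ≤ Ω) (hq : 0 ≤ q) (ht : 0 < t) :
    Ω * √q ≤ Ω / (2 * t) * q + Ω / 2 * t := by
  obtain ⟨s, hs, rfl⟩ : ∃ s, 0 ≤ s ∧ q = s ^ 2 := ⟨√q, sqrt_nonneg q, (sq_sqrt hq).symm⟩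
  have hgap : Ω / (2 * t) * s ^ 2 + Ω / 2 * t - Ω * s = Ω * (s - t) ^ 2 / (2 * t) := by
    field_simp; ring
  have : 0 ≤ Ω * (s - t) ^ 2 / (2 * t) := by positivity
  rw [sqrt_sq hs]
  linarith

lemma le_mul_sqrt_of_forall_le_div_mul_add {a Ω q : ℝ} (hq : 0 ≤ q)
    (h : ∀ t, 0 < t → a ≤ Ω / (2 * t) * q + Ω / 2 * t) : a ≤ Ω * √q := by
  rcases hq.eq_or_lt with rfl | hq
  · have hlim : Filter.Tendsto (fun t => Ω / 2 * t) (nhdsWithin 0 (Set.Ioi 0)) (nhds 0) :=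
      tendsto_nhdsWithin_of_tendsto_nhds ((continuous_const_mul _).tendsto' 0 0 (mul_zero _))
    simpa using ge_of_tendsto hlim (eventually_nhdsWithin_of_forall fun t ht => by
      simpa using h t ht)
  · obtain ⟨s, hs, rfl⟩ : ∃ s, 0 < s ∧ q = s ^ 2 := ⟨√q, sqrt_pos.mpr hq, (sq_sqrt hq.le).symm⟩
    calc a ≤ Ω / (2 * s) * s ^ 2 + Ω / 2 * s := h s hs
      _ = Ω * √(s ^ 2) := by
        rw [sqrt_sq hs.le]; field_simp; ring

end Real

theorem global_min_gives_meanRisk_optimal {n : ℕ}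
    (Q : Matrix (Fin n) (Fin n) ℝ) (hQ : Q.PosSemidef)
    (c : Fin n → ℝ) (Omega : ℝ) (hOmega : 0 < Omega)
    (X : Finset (Fin n → ℝ)) (hX : X.Nonempty)
    (g : (Fin n → ℝ) → ℝ → ℝ)
    (hg : ∀ x t, g x t = c ⬝ᵥ x + (Omega / (2 * t)) * (x ⬝ᵥ Q.mulVec x) + (Omega / 2) * t)
    (f : ℝ → ℝ) (hf : ∀ t, f t = X.inf' hX (fun x => g x t))
    (tstar : ℝ) (htstar : 0 < tstar)
    (hglob : ∀ t : ℝ, 0 < t → f tstar ≤ f t)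
    (xstar : Fin n → ℝ) (hxstar : xstar ∈ X) (hatt : f tstar = g xstar tstar) :
    c ⬝ᵥ xstar + Omega * Real.sqrt (xstar ⬝ᵥ Q.mulVec xstar) =
      X.inf' hX (fun x => c ⬝ᵥ x + Omega * Real.sqrt (x ⬝ᵥ Q.mulVec x)) ∧
    c ⬝ᵥ xstar + Omega * Real.sqrt (xstar ⬝ᵥ Q.mulVec xstar) = f tstar := by
  have hq (x : Fin n → ℝ) : 0 ≤ x ⬝ᵥ Q *ᵥ x := hQ.dotProduct_mulVec_nonneg x
  have upper : c ⬝ᵥ xstar + Omega * √(xstar ⬝ᵥ Q *ᵥ xstar) ≤ f tstar := by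
    rw [hatt, hg]
    linarith [Real.mul_sqrt_le_div_mul_add hOmega.le (hq xstar) htstar]
  have lower (x) (hx : x ∈ X) : f tstar ≤ c ⬝ᵥ x + Omega * √(x ⬝ᵥ Q *ᵥ x) := by
    have hgx (t) (ht : 0 < t) :
        f tstar - c ⬝ᵥ x ≤ Omega / (2 * t) * (x ⬝ᵥ Q *ᵥ x) + Omega / 2 * t := by
      have : f t ≤ g x t := hf t ▸ X.inf'_le _ hx
      linarith [hglob t ht, hg x t]
    linarith [Real.le_mul_sqrt_of_forall_le_div_mul_add (hq x) hgx]
  exact ⟨le_antisymm (X.le_inf' hX _ fun x hx => upper.trans (lower x hx)) (X.inf'_le _ hxstar),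
    le_antisymm upper (lower xstar hxstar)⟩
end
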